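/- Let m ≥ 2, let s_1,…,s_m be nonnegative integers with total t = s_1+⋯+s_m, and let l_j, u_j be integers with 0 ≤ l_j ≤ u_j ≤ s_j and l_j + u_j = s_j for each j (symmetric core constraints). For a nonnegative integer n let N(n) = ∑ ∏_{j=1}^m C(s_j, x_j), the sum over all x ∈ ℕ^m with x_1+⋯+x_m = n and l_j ≤ x_j ≤ u_j for all j. Then for every n with 2n ≥ t and n < t, one has N(n)·(t − n) ≥ N(n+1)·(n + 1). Equivalently, if W = W_1 + ⋯ + W_m is the sum of independent random variables W_j distributed as Bin(s_j, 1/2) truncated to {l_j,…,u_j}, then P[W = n]/P[W = n+1] ≥ (n+1)/(t−n) = P[Y = n]/P[Y = n+1] where Y ~ Bin(t, 1/2). -/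

import Mathlib

/-
With `p_j = ∑_{x = l_j}^{u_j} C(s_j, x) X^x`, `N(n)` is the `n`-th coefficient of `Q = ∏ p_j`.
Put `R_j = ∏_{k ≠ j} p_k` and `q_j = ∑_{x = l_j}^{u_j} (s_j - x) C(s_j, x) X^x`. Euler's relation
`X p_j' + q_j = s_j p_j` and the product rule give `(n + 1) Q_{n+1} = ∑_j [X p_j' R_j]_{n+1}` and
`(t - n) Q_n = ∑_j [q_j R_j]_n`, so it suffices to compare the two sums term by term.
As `(x + 1) C(s, x + 1) = (s - x) C(s, x)`, the polynomials `X p_j'` and `X q_j` are the two ways of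
cutting one end off `∑_{x = l_j}^{u_j + 1} x C(s_j, x) X^x`, and the two ends carry the same weight
`l_j C(s_j, l_j)` by the symmetry `l_j + u_j = s_j`. The comparison thus comes down to
`[R_j]_{n+1-l_j} ≤ [R_j]_{n-u_j}`. By induction on the number of factors `R_j` satisfies the same
ratio bound; together with the symmetry of its coefficients this gives `[R_j]_a ≤ [R_j]_b` whenever
`b ≤ a` and `a + b > t - s_j ≥ deg R_j`, and here `a + b = 2n + 1 - s_j` exceeds `t - s_j` because
`2n ≥ t`.
-/

open Finset

namespace Polynomial

section Semiring

variable {R : Type*} [Semiring R]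

lemma coeff_X_mul_derivative (p : R[X]) (i : ℕ) : (X * derivative p).coeff i = p.coeff i * i := by
  cases i with
  | zero => simp
  | succ i => rw [coeff_X_mul, coeff_derivative, Nat.cast_succ]

noncomputable def truncPoly (l u : ℕ) (a : ℕ → R) : R[X] := ∑ x ∈ Icc l u, C (a x) * X ^ x

lemma coeff_truncPoly (l u : ℕ) (a : ℕ → R) (i : ℕ) :
    (truncPoly l u a).coeff i = if i ∈ Icc l u then a i else 0 := by
  simp only [truncPoly, finsetSum_coeff, coeff_C_mul_X_pow, sum_ite_eq]

lemma natDegree_truncPoly_le (l u : ℕ) (a : ℕ → R) : (truncPoly l u a).natDegree ≤ u :=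
  natDegree_sum_le_of_forall_le _ _ fun _ hx =>
    (natDegree_C_mul_X_pow_le _ _).trans (mem_Icc.1 hx).2

lemma X_mul_derivative_truncPoly (l u : ℕ) (a : ℕ → R) :
    X * derivative (truncPoly l u a) = truncPoly l u (fun x => a x * x) := by
  ext i
  rw [coeff_X_mul_derivative, coeff_truncPoly, coeff_truncPoly]
  split_ifs <;> simp

lemma truncPoly_succ_top {l u : ℕ} (h : l ≤ u + 1) (a : ℕ → R) :
    truncPoly l (u + 1) a = truncPoly l u a + C (a (u + 1)) * X ^ (u + 1) :=
  sum_Icc_succ_top h _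

lemma truncPoly_succ_bot {l u : ℕ} (h : l ≤ u + 1) (a : ℕ → R) :
    truncPoly l (u + 1) a = X * truncPoly l u (fun x => a (x + 1)) + C (a l) * X ^ l := by
  rw [truncPoly, ← sum_Ioc_add_eq_sum_Icc h, ← Icc_add_one_left_eq_Ioc, ← map_add_right_Icc,
    sum_map, truncPoly, mul_sum]
  congr 1
  refine sum_congr rfl fun x _ => ?_
  simp only [addRightEmbedding_apply, pow_succ', ← mul_assoc, X_mul_C]

end Semiring

section CommSemiring

variable {R ι : Type*} [CommSemiring R]

lemma reflect_prod [DecidableEq ι] {A : Finset ι} {f : ι → R[X]} {d : ι → ℕ}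
    (hd : ∀ j ∈ A, (f j).natDegree ≤ d j) :
    reflect (∑ j ∈ A, d j) (∏ j ∈ A, f j) = ∏ j ∈ A, reflect (d j) (f j) := by
  induction A using Finset.induction_on with
  | empty => simp
  | insert a A ha ih =>
    have hA : ∀ j ∈ A, (f j).natDegree ≤ d j := fun j hj => hd j (mem_insert_of_mem hj)
    rw [prod_insert ha, sum_insert ha, reflect_mul _ _ (hd a (mem_insert_self a A))
      ((natDegree_prod_le _ _).trans (sum_le_sum hA)), ih hA, prod_insert ha]

lemma X_mul_derivative_prod [DecidableEq ι] (A : Finset ι) (p : ι → R[X]) :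
    X * derivative (∏ j ∈ A, p j) = ∑ j ∈ A, X * derivative (p j) * ∏ k ∈ A.erase j, p k := by
  rw [derivative_prod_finset, mul_sum]
  exact sum_congr rfl fun j _ => by ring

lemma X_mul_derivative_prod_add_sum_mul_prod_erase [DecidableEq ι] (A : Finset ι)
    (p q : ι → R[X]) (s : ι → R) (h : ∀ j ∈ A, X * derivative (p j) + q j = C (s j) * p j) :
    X * derivative (∏ j ∈ A, p j) + ∑ j ∈ A, q j * ∏ k ∈ A.erase j, p k
      = C (∑ j ∈ A, s j) * ∏ j ∈ A, p j := by
  rw [X_mul_derivative_prod, ← sum_add_distrib, map_sum, sum_mul]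
  refine sum_congr rfl fun j hj => ?_
  rw [← add_mul, h j hj, mul_assoc, mul_prod_erase A p hj]

lemma coeff_prod_truncPoly [DecidableEq ι] [Fintype ι] (l u : ι → ℕ) (a : ι → ℕ → R) (r : ℕ) :
    (∏ j, truncPoly (l j) (u j) (a j)).coeff r
      = ∑ x ∈ (Fintype.piFinset fun j => Icc (l j) (u j)) with ∑ j, x j = r, ∏ j, a j (x j) := by
  simp only [truncPoly]
  rw [prod_univ_sum (fun j => Icc (l j) (u j)), finsetSum_coeff, sum_filter]
  refine sum_congr rfl fun x _ => ?_
  rw [prod_mul_distrib, ← map_prod, prod_pow_eq_pow_sum, coeff_C_mul_X_pow]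
  simp only [eq_comm]

end CommSemiring

end Polynomial

namespace TruncatedBinomial

open Polynomial

lemma coeff_le_coeff_of_ratio_le {Q : ℕ[X]} {T : ℕ} (hQ : reflect T Q = Q)
    (hratio : ∀ n, T ≤ 2 * n → Q.coeff (n + 1) * (n + 1) ≤ Q.coeff n * (T - n))
    {a b : ℕ} (hba : b ≤ a) (hab : T < a + b) : Q.coeff a ≤ Q.coeff b := by
  have hanti : AntitoneOn Q.coeff (Set.Ici ((T + 1) / 2)) := by
    refine antitoneOn_nat_Ici_of_succ_le fun n hn => ?_
    have hTn : T - n ≤ n + 1 := by omega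
    exact Nat.le_of_mul_le_mul_right
      ((hratio n (by omega)).trans (Nat.mul_le_mul_left _ hTn)) n.succ_pos
  by_cases hb : T ≤ 2 * b
  · exact hanti (Set.mem_Ici.2 (by omega)) (Set.mem_Ici.2 (by omega)) hba
  · have hsymm : Q.coeff (T - b) = Q.coeff b := by
      conv_lhs => rw [← hQ]
      rw [coeff_reflect, revAt_le (by omega), Nat.sub_sub_self (by omega)]
    rw [← hsymm]
    exact hanti (Set.mem_Ici.2 (by omega)) (Set.mem_Ici.2 (by omega)) (by omega)

lemma coeff_X_pow_mul_le_coeff_X_pow_mul {P : ℕ[X]} {T k k' N : ℕ} (hdeg : P.natDegree ≤ T)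
    (hmono : ∀ a b, b ≤ a → T < a + b → P.coeff a ≤ P.coeff b) (hk : k ≤ k')
    (hN : k + k' + T < 2 * N) : (X ^ k * P).coeff N ≤ (X ^ k' * P).coeff N := by
  rw [coeff_X_pow_mul', coeff_X_pow_mul']
  split_ifs
  · exact hmono _ _ (by omega) (by omega)
  · exact (coeff_eq_zero_of_natDegree_lt (by omega)).le
  · omega
  · exact le_rfl

noncomputable def truncBinom (s l u : ℕ) : ℕ[X] := truncPoly l u s.choose

lemma reflect_truncBinom {s l u : ℕ} (hsym : l + u = s) :
    reflect s (truncBinom s l u) = truncBinom s l u := by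
  ext i
  rw [coeff_reflect, truncBinom, coeff_truncPoly, coeff_truncPoly]
  rcases le_or_gt i s with h | h
  · rw [revAt_le h]
    simp only [mem_Icc]
    split_ifs <;> first | omega | rfl | exact Nat.choose_symm h
  · rw [revAt_eq_self_of_lt h]

lemma X_mul_derivative_truncBinom_add {s l u : ℕ} (hus : u ≤ s) :
    X * derivative (truncBinom s l u) + truncPoly l u (fun x => s.choose x * (s - x))
      = C s * truncBinom s l u := by
  ext i
  rw [truncBinom, X_mul_derivative_truncPoly, coeff_add, coeff_C_mul, coeff_truncPoly,
    coeff_truncPoly, coeff_truncPoly]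
  split_ifs with hi
  · rw [mem_Icc] at hi
    rw [← mul_add, mul_comm, Nat.cast_id]
    congr 1
    omega
  · simp

lemma coeff_X_mul_derivative_truncBinom_mul_le {s l u T n : ℕ} {P : ℕ[X]} (hlu : l ≤ u)
    (hsym : l + u = s) (hdeg : P.natDegree ≤ T)
    (hmono : ∀ a b, b ≤ a → T < a + b → P.coeff a ≤ P.coeff b) (hn : s + T ≤ 2 * n) :
    (X * derivative (truncBinom s l u) * P).coeff (n + 1)
      ≤ (truncPoly l u (fun x => s.choose x * (s - x)) * P).coeff n := by
  set a : ℕ → ℕ := fun x => s.choose x * x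
  have hends : a (u + 1) = a l := by
    simp only [a]
    rw [Nat.choose_succ_right_eq, Nat.choose_symm_of_eq_add hsym.symm]
    congr 1
    omega
  have hderiv : X * derivative (truncBinom s l u) = truncPoly l u a := by
    rw [truncBinom, X_mul_derivative_truncPoly]
    simp only [a, Nat.cast_id]
  have hsucc : (fun x => a (x + 1)) = fun x => s.choose x * (s - x) :=
    funext fun x => Nat.choose_succ_right_eq s x
  have hshift : truncPoly l u a + C (a (u + 1)) * X ^ (u + 1)
      = X * truncPoly l u (fun x => a (x + 1)) + C (a l) * X ^ l := by
    rw [← truncPoly_succ_top (by omega), truncPoly_succ_bot (by omega)]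
  rw [← hderiv, hsucc, hends] at hshift
  have hcoeff := congrArg (fun p => (p * P).coeff (n + 1)) hshift
  simp only [add_mul, coeff_add, mul_assoc, coeff_C_mul, coeff_X_mul] at hcoeff
  have hle : (X ^ l * P).coeff (n + 1) ≤ (X ^ (u + 1) * P).coeff (n + 1) :=
    coeff_X_pow_mul_le_coeff_X_pow_mul hdeg hmono (by omega) (by omega)
  have := Nat.mul_le_mul_left (a l) hle
  rw [mul_assoc, coeff_X_mul]
  omega

lemma natDegree_prod_truncBinom_le {ι : Type*} (s l u : ι → ℕ) (hus : ∀ j, u j ≤ s j)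
    (A : Finset ι) : (∏ j ∈ A, truncBinom (s j) (l j) (u j)).natDegree ≤ ∑ j ∈ A, s j :=
  (natDegree_prod_le _ _).trans <| sum_le_sum fun j _ =>
    (natDegree_truncPoly_le _ _ _).trans (hus j)

theorem coeff_prod_truncBinom_ratio_le {ι : Type*} [DecidableEq ι] (s l u : ι → ℕ)
    (hlu : ∀ j, l j ≤ u j) (hsym : ∀ j, l j + u j = s j) (A : Finset ι) (n : ℕ)
    (hn : ∑ j ∈ A, s j ≤ 2 * n) :
    (∏ j ∈ A, truncBinom (s j) (l j) (u j)).coeff (n + 1) * (n + 1)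
      ≤ (∏ j ∈ A, truncBinom (s j) (l j) (u j)).coeff n * (∑ j ∈ A, s j - n) := by
  induction A using Finset.strongInduction generalizing n with
  | H A ih =>
  set p : ι → ℕ[X] := fun j => truncBinom (s j) (l j) (u j)
  set q : ι → ℕ[X] := fun j => truncPoly (l j) (u j) (fun x => (s j).choose x * (s j - x))
  have hus : ∀ j, u j ≤ s j := fun j => by have := hsym j; omega
  have hfactor : ∀ j ∈ A, (X * derivative (p j) * ∏ k ∈ A.erase j, p k).coeff (n + 1)
      ≤ (q j * ∏ k ∈ A.erase j, p k).coeff n := by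
    intro j hj
    have hsymm : reflect (∑ k ∈ A.erase j, s k) (∏ k ∈ A.erase j, p k) = ∏ k ∈ A.erase j, p k := by
      rw [reflect_prod (f := p) fun k _ => (natDegree_truncPoly_le _ _ _).trans (hus k)]
      exact prod_congr rfl fun k _ => reflect_truncBinom (hsym k)
    refine coeff_X_mul_derivative_truncBinom_mul_le (hlu j) (hsym j)
      (natDegree_prod_truncBinom_le s l u hus _)
      (fun a b => coeff_le_coeff_of_ratio_le hsymm (ih _ (erase_ssubset hj))) ?_
    rw [add_sum_erase A s hj]
    exact hn
  have heuler := congrArg (coeff · n) <| X_mul_derivative_prod_add_sum_mul_prod_erase A p q s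
    fun j _ => X_mul_derivative_truncBinom_add (hus j)
  simp only [coeff_add, coeff_X_mul_derivative, Nat.cast_id, finsetSum_coeff, coeff_C_mul]
    at heuler
  calc (∏ j ∈ A, p j).coeff (n + 1) * (n + 1)
      = ∑ j ∈ A, (X * derivative (p j) * ∏ k ∈ A.erase j, p k).coeff (n + 1) := by
        rw [← finsetSum_coeff, ← X_mul_derivative_prod, coeff_X_mul_derivative, Nat.cast_id]
    _ ≤ ∑ j ∈ A, (q j * ∏ k ∈ A.erase j, p k).coeff n := by exact sum_le_sum hfactor
    _ = (∏ j ∈ A, p j).coeff n * (∑ j ∈ A, s j - n) := by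
        rw [Nat.mul_sub, mul_comm]
        omega

end TruncatedBinomial

theorem truncated_binomial_ratio_general (m : ℕ) (s l u : Fin m → ℕ)
    (hlu : ∀ j, l j ≤ u j)
    (hsym : ∀ j, l j + u j = s j)
    (t : ℕ) (ht : t = ∑ j, s j)
    (N : ℕ → ℕ)
    (hN : ∀ r, N r = ∑ x ∈ (Fintype.piFinset fun j => Finset.Icc (l j) (u j)).filter
        (fun x => ∑ j, x j = r), ∏ j, (s j).choose (x j))
    (n : ℕ) (h1 : t ≤ 2 * n) :
    N (n + 1) * (n + 1) ≤ N n * (t - n) := by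
  have key := TruncatedBinomial.coeff_prod_truncBinom_ratio_le s l u hlu hsym univ n (ht ▸ h1)
  simpa only [TruncatedBinomial.truncBinom, Polynomial.coeff_prod_truncPoly, ← hN, ← ht] using key

/-- Corollary to Theorem 1: the convolution `W` of symmetrically truncated
binomial `Bin(s_j, 1/2)` variables satisfies
`P[W = n]/P[W = n+1] ≥ (n+1)/(t-n)` for `⌈t/2⌉ ≤ n < t`, stated in
cross-multiplied integer form `N(n)·(t-n) ≥ N(n+1)·(n+1)`. -/
theorem truncated_binomial_ratio (m : ℕ) (hm : 2 ≤ m) (s l u : Fin m → ℕ)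
    (hlu : ∀ j, l j ≤ u j) (hus : ∀ j, u j ≤ s j)
    (hsym : ∀ j, l j + u j = s j)
    (t : ℕ) (ht : t = ∑ j, s j)
    (N : ℕ → ℕ)
    (hN : ∀ r, N r = ∑ x ∈ (Fintype.piFinset fun j => Finset.Icc (l j) (u j)).filter
        (fun x => ∑ j, x j = r), ∏ j, (s j).choose (x j))
    (n : ℕ) (h1 : t ≤ 2 * n) (h2 : n < t) :
    N (n + 1) * (n + 1) ≤ N n * (t - n) :=
  truncated_binomial_ratio_general m s l u hlu hsym t ht N hN n h1
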